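/- arXiv:2210.06055 — 4 statements merged into one kernel-verified Lean document; each statement's English description precedes it below -/
import Mathlib

section
/- Define the tree height function H : ℕ → ℕ recursively by H(1) = 0 and, for n > 1 with prime factorization n = p₁^{α₁} ⋯ p_k^{α_k}, H(n) = 1 + max over i of H(αᵢ). Then for every m ≥ 0, the smallest natural number n with H(n) = m is 2↑↑m (the tetration tower of 2's of height m, with 2↑↑0 = 1). -/
/-- Tetration base 2: `tet 0 = 1`, `tet (m+1) = 2 ^ tet m`. -/
def tet : ℕ → ℕ
  | 0 => 1
  | m + 1 => 2 ^ tet m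

/-- Height of the super-factorization tree of `n`:
`H 1 = 0` and `H n = 1 + max_{p^α ∥ n} H α` for `n > 1`. -/
def H : ℕ → ℕ
  | n =>
    if h : n ≤ 1 then 0
    else 1 + (n.primeFactors.attach.sup fun p => H (n.factorization p.1))
decreasing_by
  exact Nat.factorization_lt _ (by omega)

/-!
Since `2 ^ k` has the single exponent `k`, `H (2 ^ k) = 1 + H k`, so `H (tet m) = m`.
Conversely, if `H n` is attained at the exponent `k` of `p ∣ n`, then by strong induction
`tet (H n) = 2 ^ tet (H k) ≤ 2 ^ k ≤ p ^ k ≤ n`.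
-/

lemma H_of_le_one {n : ℕ} (hn : n ≤ 1) : H n = 0 := by
  rw [H, dif_pos hn]

lemma H_of_one_lt {n : ℕ} (hn : 1 < n) :
    H n = 1 + n.primeFactors.sup fun p => H (n.factorization p) := by
  rw [H, dif_neg (by omega), Finset.sup_attach n.primeFactors fun p => H (n.factorization p)]

lemma H_prime_pow {p k : ℕ} (hp : p.Prime) (hk : k ≠ 0) : H (p ^ k) = 1 + H k := by
  rw [H_of_one_lt (Nat.one_lt_pow hk hp.one_lt), Nat.primeFactors_prime_pow hk hp,
    Finset.sup_singleton, hp.factorization_pow, Finsupp.single_eq_same]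

lemma exists_prime_pow_dvd_and_H_eq {n : ℕ} (hn : 1 < n) :
    ∃ p k, p.Prime ∧ k ≠ 0 ∧ p ^ k ∣ n ∧ H n = 1 + H k := by
  obtain ⟨p, hp, hsup⟩ := Finset.exists_mem_eq_sup n.primeFactors
    (Nat.nonempty_primeFactors.mpr hn) fun p => H (n.factorization p)
  refine ⟨p, n.factorization p, Nat.prime_of_mem_primeFactors hp,
    Finsupp.mem_support_iff.mp (by rwa [Nat.support_factorization]), Nat.ordProj_dvd n p, ?_⟩
  rw [H_of_one_lt hn, hsup]

lemma tet_pos (m : ℕ) : 0 < tet m := by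
  cases m with
  | zero => exact Nat.one_pos
  | succ m => exact Nat.two_pow_pos _

lemma H_tet (m : ℕ) : H (tet m) = m := by
  induction m with
  | zero => exact H_of_le_one le_rfl
  | succ m ih => rw [tet, H_prime_pow Nat.prime_two (tet_pos m).ne', ih, add_comm]

lemma tet_H_le {n : ℕ} (hn : 1 ≤ n) : tet (H n) ≤ n := by
  induction n using Nat.strong_induction_on with
  | _ n ih =>
    rcases hn.eq_or_lt with rfl | hn
    · rw [H_of_le_one le_rfl]; rfl
    obtain ⟨p, k, hp, hk, hdvd, hH⟩ := exists_prime_pow_dvd_and_H_eq hn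
    have hkn : k < n := (Nat.lt_pow_self hp.one_lt).trans_le (Nat.le_of_dvd (by omega) hdvd)
    calc tet (H n) = 2 ^ tet (H k) := by rw [hH, add_comm]; rfl
      _ ≤ 2 ^ k := Nat.pow_le_pow_right two_pos (ih k hkn (Nat.one_le_iff_ne_zero.mpr hk))
      _ ≤ p ^ k := Nat.pow_le_pow_left hp.two_le k
      _ ≤ n := Nat.le_of_dvd (by omega) hdvd

theorem stmt2 (m : ℕ) : IsLeast {n : ℕ | 1 ≤ n ∧ H n = m} (tet m) :=
  ⟨⟨tet_pos m, H_tet m⟩, fun _ ⟨hn, hHn⟩ => hHn ▸ tet_H_le hn⟩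
end

section
/- The constant κ = exp(∑_p 1/(p log p)), where the sum is over all primes p, satisfies κ ≤ 5.5 (in particular the series ∑_p 1/(p log p) converges). -/
/-!
Write `h(x) = 1 / (x log² x)`, so that `1 / (p log p) = log p · h(p)`. Summation by parts
against Chebyshev's function `θ` shows that
`Φ(M) = ∑_{p ≤ M} 1 / (p log p) + (M log 4 - θ(M)) h(M) + log 4 / log M`
is non-increasing for `M ≥ 2`: besides Chebyshev's bound `θ(M) ≤ M log 4`, this only needs that
`h` decreases and that `h(M + 1) ≤ 1 / log M - 1 / log (M + 1)`. The last two terms of `Φ` are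
nonnegative, so every partial sum of the series is at most `Φ(1000)`, and `Φ(1000) < log 5.5` is
checked by an exact rational computation, bounding `log p` below via `2 ^ ⌊log₂ pᵏ⌋ ≤ pᵏ`.
-/

/-- `κ = exp (∑_p 1 / (p log p))`, the sum over all primes. -/
noncomputable def kappa : ℝ :=
  Real.exp (∑' p : Nat.Primes, 1 / (((p : ℕ) : ℝ) * Real.log (p : ℕ)))

open Finset Real Chebyshev

theorem Real.one_div_mul_log_sq_le_of_le {x y : ℝ} (hx : 1 < x) (hxy : x ≤ y) :
    1 / (y * log y ^ 2) ≤ 1 / (x * log x ^ 2) := by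
  have hlog : 0 < log x := log_pos hx
  have hlog_le : log x ≤ log y := log_le_log (by linarith) hxy
  have hy : 0 ≤ y := by linarith
  gcongr

theorem Real.one_div_mul_log_sq_add_one_le {x : ℝ} (hx : 1 < x) :
    1 / ((x + 1) * log (x + 1) ^ 2) ≤ 1 / log x - 1 / log (x + 1) := by
  have hx0 : 0 < x := by linarith
  have hlog : 0 < log x := log_pos hx
  have hlog_le : log x ≤ log (x + 1) := log_le_log hx0 (by linarith)
  have hlog' : 0 < log (x + 1) := hlog.trans_le hlog_le
  have hgap : 1 / (x + 1) ≤ log (x + 1) - log x := by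
    rw [← log_div (by linarith) hx0.ne']
    calc 1 / (x + 1) = 1 - ((x + 1) / x)⁻¹ := by field_simp; ring
      _ ≤ log ((x + 1) / x) := one_sub_inv_le_log_of_pos (by positivity)
  rw [div_sub_div _ _ hlog.ne' hlog'.ne', one_mul, mul_one, div_le_div_iff₀ (by positivity)
    (by positivity), one_mul]
  calc log x * log (x + 1) ≤ log (x + 1) ^ 2 := by nlinarith
    _ = (x + 1) * log (x + 1) ^ 2 * (1 / (x + 1)) := by field_simp
    _ ≤ (x + 1) * log (x + 1) ^ 2 * (log (x + 1) - log x) := by gcongr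
    _ = (log (x + 1) - log x) * ((x + 1) * log (x + 1) ^ 2) := mul_comm _ _

theorem Nat.sum_primesLE_succ {β : Type*} [AddCommMonoid β] (n : ℕ) (w : ℕ → β) :
    ∑ p ∈ Nat.primesLE (n + 1), w p =
      ∑ p ∈ Nat.primesLE n, w p + if (n + 1).Prime then w (n + 1) else 0 := by
  rw [Nat.primesLE_succ]
  split_ifs
  · rw [sum_insert (Nat.notMem_primesLE n), add_comm]
  · rw [add_zero]

theorem Nat.Primes.summable_and_tsum_le {w : ℕ → ℝ} (hw : ∀ p : Nat.Primes, 0 ≤ w p) {c : ℝ}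
    {N : ℕ} (h : ∀ M ≥ N, ∑ p ∈ Nat.primesLE M, w p ≤ c) :
    Summable (fun p : Nat.Primes => w p) ∧ ∑' p : Nat.Primes, w p ≤ c := by
  have hu (u : Finset Nat.Primes) : ∑ p ∈ u, w p ≤ c := by
    let ι : Nat.Primes ↪ ℕ := ⟨(↑), Subtype.coe_injective⟩
    have hsub : u.map ι ⊆ Nat.primesLE (max N (u.sup ι)) := by
      intro n hn
      obtain ⟨p, hp, rfl⟩ := mem_map.mp hn
      exact Nat.mem_primesLE.mpr ⟨(le_sup (f := ι) hp).trans (le_max_right _ _), p.prop⟩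
    calc ∑ p ∈ u, w p = ∑ n ∈ u.map ι, w n := (sum_map u ι w).symm
      _ ≤ ∑ n ∈ Nat.primesLE (max N (u.sup ι)), w n :=
        sum_le_sum_of_subset_of_nonneg hsub fun n hn _ => hw ⟨n, (Nat.mem_primesLE.mp hn).2⟩
      _ ≤ c := h _ (le_max_left _ _)
  exact ⟨summable_of_sum_le (fun p => hw p) hu, Real.tsum_le_of_sum_le (fun p => hw p) hu⟩

theorem log4_mul_sub_theta_nonneg (M : ℕ) : 0 ≤ log 4 * M - θ M :=
  sub_nonneg.mpr (theta_le_log4_mul_x M.cast_nonneg)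

noncomputable def primeSumMajorant (M : ℕ) : ℝ :=
  ∑ p ∈ Nat.primesLE M, 1 / (p * log p) + (log 4 * M - θ M) / (M * log M ^ 2) + log 4 / log M

theorem primeSumMajorant_succ_le {M : ℕ} (hM : 2 ≤ M) :
    primeSumMajorant (M + 1) ≤ primeSumMajorant M := by
  have hM1 : (1 : ℝ) < M := by exact_mod_cast hM
  set h : ℝ := 1 / ((M + 1) * log (M + 1) ^ 2)
  set ℓ : ℝ := if (M + 1).Prime then log (M + 1) else 0
  have hθ : θ (M + 1 : ℕ) = θ M + ℓ := by
    simp only [theta_eq_sum_primesLE_log, Nat.sum_primesLE_succ, ℓ]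
    push_cast
    rfl
  have hS : ∑ p ∈ Nat.primesLE (M + 1), 1 / ((p : ℝ) * log p) =
      ∑ p ∈ Nat.primesLE M, 1 / ((p : ℝ) * log p) + ℓ * h := by
    have : log ((M : ℝ) + 1) ≠ 0 := (log_pos (by linarith)).ne'
    rw [Nat.sum_primesLE_succ]
    congr 1
    simp only [ℓ, h]
    split_ifs
    · push_cast; field_simp
    · simp
  have ha := log4_mul_sub_theta_nonneg M
  have hc : 0 < log 4 := log_pos (by norm_num)
  have hanti : h ≤ 1 / (M * log M ^ 2) :=
    Real.one_div_mul_log_sq_le_of_le hM1 (by linarith)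
  have hstep : h ≤ 1 / log M - 1 / log (M + 1) := Real.one_div_mul_log_sq_add_one_le hM1
  unfold primeSumMajorant
  rw [hS, hθ]
  push_cast
  -- `Φ(M + 1) - Φ(M) = (M log 4 - θ M) (h - h(M)) + log 4 (h - 1 / log M + 1 / log (M + 1))`
  linear_combination mul_le_mul_of_nonneg_left hanti ha + mul_le_mul_of_nonneg_left hstep hc.le

theorem sum_primesLE_le_primeSumMajorant {N M : ℕ} (hN : 2 ≤ N) (hNM : N ≤ M) :
    ∑ p ∈ Nat.primesLE M, 1 / ((p : ℝ) * log p) ≤ primeSumMajorant N := by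
  have hanti : primeSumMajorant M ≤ primeSumMajorant N := by
    induction M, hNM using Nat.le_induction with
    | base => rfl
    | succ M hNM ih => exact (primeSumMajorant_succ_le (hN.trans hNM)).trans ih
  have ha := log4_mul_sub_theta_nonneg M
  refine le_trans ?_ hanti
  rw [primeSumMajorant, add_assoc]
  exact le_add_of_nonneg_right (by positivity)

def logLowerBound (k n : ℕ) : ℚ := ((n ^ k).log2 : ℚ) / k * 0.6931471803

theorem logLowerBound_le_log (k n : ℕ) : (logLowerBound k n : ℝ) ≤ log n := by
  rcases Nat.eq_zero_or_pos n with rfl | hn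
  · rcases Nat.eq_zero_or_pos k with rfl | hk <;> simp [logLowerBound, *]
  rcases Nat.eq_zero_or_pos k with rfl | hk
  · simp [logLowerBound, log_natCast_nonneg]
  have hpow : 2 ^ (n ^ k).log2 ≤ n ^ k := Nat.log2_self_le (by positivity)
  have hlog : ((n ^ k).log2 : ℝ) * log 2 ≤ k * log n := by
    rw [← log_pow, ← log_pow]
    exact log_le_log (by positivity) (by exact_mod_cast hpow)
  have hk' : (0 : ℝ) < k := by exact_mod_cast hk
  simp only [logLowerBound]
  push_cast
  rw [div_mul_eq_mul_div, div_le_iff₀ hk']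
  nlinarith [log_two_gt_d9, (Nat.cast_nonneg _ : (0 : ℝ) ≤ (n ^ k).log2)]

theorem logLowerBound_pos {k n : ℕ} (hk : 0 < k) (hn : 2 ≤ n) : 0 < logLowerBound k n := by
  have : k ≤ (n ^ k).log2 :=
    (Nat.le_log2 (by positivity)).mpr (Nat.pow_le_pow_left hn k)
  have : (0 : ℚ) < (n ^ k).log2 := by exact_mod_cast hk.trans_le this
  unfold logLowerBound
  positivity

def trialPrime (B n : ℕ) : Bool :=
  2 ≤ n && (List.range' 2 B).all fun d => n < d * d || n % d != 0

theorem trialPrime_iff {B n : ℕ} (hn : n < B * B) : trialPrime B n = true ↔ n.Prime := by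
  simp only [trialPrime, Bool.and_eq_true, decide_eq_true_eq, List.all_eq_true, List.mem_range',
    Bool.or_eq_true, bne_iff_ne, ne_eq, ← Nat.dvd_iff_mod_eq_zero, one_mul]
  constructor
  · rintro ⟨h2, hdiv⟩
    by_contra hnp
    have hmin := Nat.minFac_prime (by omega : n ≠ 1)
    have hsq : n.minFac ^ 2 ≤ n := Nat.minFac_sq_le_self (by omega) hnp
    have hlt : n.minFac < B := by nlinarith
    have h2min := hmin.two_le
    obtain ⟨i, hi, hd⟩ : ∃ i < B, n.minFac = 2 + i := ⟨n.minFac - 2, by omega, by omega⟩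
    rcases hdiv _ ⟨i, hi, hd⟩ with h | h
    · nlinarith
    · exact h (Nat.minFac_dvd n)
  · intro hp
    refine ⟨hp.two_le, fun d ⟨i, _, hd⟩ => ?_⟩
    by_cases hdn : d ∣ n
    · rcases hp.eq_one_or_self_of_dvd d hdn with h | h
      · omega
      · left; nlinarith [hp.two_le]
    · exact Or.inr hdn

/-- `primeSumMajorant N` with the primes found by trial division, `log p` replaced by
`logLowerBound k p` and `log 4` by its upper bound `2 * 0.6931471808` from `Real.log_two_lt_d9`,
so that the kernel can evaluate it exactly. -/
def primeSumMajorantUpper (k B N : ℕ) : ℚ :=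
  let P := (range (N + 1)).filter (fun n => trialPrime B n)
  let c : ℚ := 2 * 0.6931471808
  ∑ p ∈ P, 1 / (p * logLowerBound k p) +
    (c * N - ∑ p ∈ P, logLowerBound k p) / (N * logLowerBound k N ^ 2) + c / logLowerBound k N

theorem primeSumMajorant_le_upper {k B N : ℕ} (hk : 0 < k) (hN : 2 ≤ N) (hNB : N < B * B) :
    primeSumMajorant N ≤ primeSumMajorantUpper k B N := by
  have hP : (range (N + 1)).filter (fun n => trialPrime B n) = Nat.primesLE N :=
    filter_congr fun n hn =>
      trialPrime_iff ((Nat.lt_succ_iff.mp (mem_range.mp hn)).trans_lt hNB)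
  let L (n : ℕ) : ℝ := logLowerBound k n
  have hL_pos {n : ℕ} (hn : 2 ≤ n) : 0 < L n := Rat.cast_pos.mpr (logLowerBound_pos hk hn)
  have hL_le (n : ℕ) : L n ≤ log n := logLowerBound_le_log k n
  have hhead : ∑ p ∈ Nat.primesLE N, 1 / ((p : ℝ) * log p) ≤
      ∑ p ∈ Nat.primesLE N, 1 / (p * L p) := by
    refine sum_le_sum fun p hp => ?_
    have hp2 := (Nat.mem_primesLE.mp hp).2.two_le
    have := hL_pos hp2
    gcongr
    exact hL_le p
  have hθ : ∑ p ∈ Nat.primesLE N, L p ≤ θ N := by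
    rw [theta_eq_sum_primesLE_log]
    exact sum_le_sum fun p _ => hL_le p
  have hc : log 4 ≤ 2 * 0.6931471808 := by
    rw [show (4 : ℝ) = 2 ^ 2 by norm_num, log_pow]
    push_cast
    linarith [log_two_lt_d9]
  have ha := log4_mul_sub_theta_nonneg N
  have hLN := hL_pos hN
  have htail : (log 4 * N - θ N) / (N * log N ^ 2) ≤
      (2 * 0.6931471808 * N - ∑ p ∈ Nat.primesLE N, L p) / (N * L N ^ 2) := by
    have : (0 : ℝ) ≤ N := by positivity
    apply div_le_div₀ (by nlinarith) (by nlinarith) (by positivity)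
    gcongr
    exact hL_le N
  have hlast : log 4 / log N ≤ 2 * 0.6931471808 / L N :=
    div_le_div₀ (by norm_num) hc hLN (hL_le N)
  simp only [primeSumMajorant, primeSumMajorantUpper, hP]
  push_cast
  linarith

theorem primeSumMajorant_thousand_le : primeSumMajorant 1000 ≤ log 5.5 := by
  have hcomp : primeSumMajorantUpper 128 32 1000 ≤ logLowerBound 1024 11 - 0.6931471808 := by
    decide +kernel
  calc primeSumMajorant 1000 ≤ primeSumMajorantUpper 128 32 1000 :=
        primeSumMajorant_le_upper (by norm_num) (by norm_num) (by norm_num)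
    _ ≤ logLowerBound 1024 11 - 0.6931471808 := by
        have := (Rat.cast_le (K := ℝ)).mpr hcomp
        push_cast at this
        exact this
    _ ≤ log 11 - log 2 := by
        have := logLowerBound_le_log 1024 11
        push_cast at this
        linarith [log_two_lt_d9]
    _ = log 5.5 := by rw [← log_div (by norm_num) (by norm_num)]; norm_num

theorem stmt9 :
    Summable (fun p : Nat.Primes => 1 / (((p : ℕ) : ℝ) * Real.log (p : ℕ))) ∧
      kappa ≤ 5.5 := by
  obtain ⟨hsum, htsum⟩ :=
    Nat.Primes.summable_and_tsum_le (w := fun n => 1 / ((n : ℝ) * log n)) (fun p => by positivity)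
      fun M hM => sum_primesLE_le_primeSumMajorant (N := 1000) (by norm_num) hM
  refine ⟨hsum, ?_⟩
  calc kappa ≤ exp (log 5.5) := exp_le_exp.mpr (htsum.trans primeSumMajorant_thousand_le)
    _ = 5.5 := exp_log (by norm_num)
end

section
/- For every integer α ≥ 2, the infinite series ∑ 1/d over positive integers d > 1 such that p ∣ d implies p^α ∣ d for all primes p, converges. -/
/-!
Every powerful number `n` is of the form `a ^ 2 * b ^ 3`, since every exponent `e ≥ 2` is `2 i + 3 j`
with `j = e % 2`. The map `n ↦ (a, b)` is injective, so `∑ 1 / n` over powerful `n` is a subsum of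
`(∑ 1 / a ^ 2) (∑ 1 / b ^ 3) < ∞`. For `α ≥ 2` every `α`-full number is powerful.
-/

namespace Nat

def Powerful (n : ℕ) : Prop :=
  n ≠ 0 ∧ ∀ p : ℕ, p.Prime → p ∣ n → p ^ 2 ∣ n

def sqFactor (n : ℕ) : ℕ :=
  ∏ p ∈ n.primeFactors, p ^ ((n.factorization p - 3 * (n.factorization p % 2)) / 2)

def cubeFactor (n : ℕ) : ℕ :=
  ∏ p ∈ n.primeFactors, p ^ (n.factorization p % 2)

theorem Powerful.sqFactor_sq_mul_cubeFactor_cube {n : ℕ} (h : n.Powerful) :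
    sqFactor n ^ 2 * cubeFactor n ^ 3 = n := by
  rw [sqFactor, cubeFactor, ← Finset.prod_pow, ← Finset.prod_pow, ← Finset.prod_mul_distrib]
  conv_rhs => rw [← prod_factorization_pow_eq_self h.1, prod_factorization_eq_prod_primeFactors]
  refine Finset.prod_congr rfl fun p hp => ?_
  have hp' : p.Prime := prime_of_mem_primeFactors hp
  have h2 : 2 ≤ n.factorization p :=
    (hp'.pow_dvd_iff_le_factorization h.1).mp (h.2 p hp' (dvd_of_mem_primeFactors hp))
  rw [← pow_mul, ← pow_mul, ← pow_add]
  congr 1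
  omega

end Nat

theorem summable_one_div_sq_mul_cube :
    Summable (fun x : ℕ × ℕ => (1 : ℝ) / ((x.1 ^ 2 * x.2 ^ 3 : ℕ) : ℝ)) := by
  have hsq := Real.summable_one_div_nat_pow.mpr one_lt_two
  have hcube := Real.summable_one_div_nat_pow.mpr (by norm_num : 1 < 3)
  refine (hsq.mul_of_nonneg hcube (fun _ => by positivity) (fun _ => by positivity)).congr ?_
  intro x
  push_cast
  rw [one_div_mul_one_div]

theorem summable_one_div_powerful :
    Summable (fun n : {n : ℕ // n.Powerful} => (1 : ℝ) / ((n : ℕ) : ℝ)) := by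
  have key (n : {n : ℕ // n.Powerful}) : Nat.sqFactor n ^ 2 * Nat.cubeFactor n ^ 3 = n :=
    n.2.sqFactor_sq_mul_cubeFactor_cube
  have hinj : Function.Injective fun n : {n : ℕ // n.Powerful} =>
      (Nat.sqFactor n, Nat.cubeFactor n) := by
    intro m n hmn
    simp only [Prod.mk.injEq] at hmn
    exact Subtype.ext (by rw [← key m, ← key n, hmn.1, hmn.2])
  refine (summable_one_div_sq_mul_cube.comp_injective hinj).congr fun n => ?_
  simp only [Function.comp_apply, key]

theorem stmt11 (α : ℕ) (hα : 2 ≤ α) :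
    Summable (fun d : {d : ℕ // 1 < d ∧ ∀ p : ℕ, p.Prime → p ∣ d → p ^ α ∣ d} =>
      (1 : ℝ) / ((d : ℕ) : ℝ)) := by
  let toPowerful (d : {d : ℕ // 1 < d ∧ ∀ p : ℕ, p.Prime → p ∣ d → p ^ α ∣ d}) :
      {n : ℕ // n.Powerful} :=
    ⟨d, Nat.ne_zero_of_lt d.2.1, fun p hp hpd => (pow_dvd_pow p hα).trans (d.2.2 p hp hpd)⟩
  have hinj : Function.Injective toPowerful := fun d e h =>
    Subtype.ext (congrArg Subtype.val h :)
  exact (summable_one_div_powerful.comp_injective hinj).congr fun _ => rfl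
end

section
/- For every m ≥ 4, the quantity d_m = −∑_{d>1} 𝓕_{m−1}(d)/φ(d) satisfies 0 ≤ d_m ≤ 2^28/(2↑↑m), where φ is Euler's totient function. -/
/-- `f m n` = 1 if `H n ≤ m`, else 0. -/
def f (m n : ℕ) : ℤ := if H n ≤ m then 1 else 0

/-- `F m n = ∏_{p^α ∥ n} (f (m-1) α - f (m-1) (α-1))`. -/
def F (m n : ℕ) : ℤ :=
  ∏ p ∈ n.primeFactors, (f (m - 1) (n.factorization p) - f (m - 1) (n.factorization p - 1))

/-!
`F μ / φ` is multiplicative, and its partial sums along the powers of a prime lie in `[0, 1]`: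
by Abel summation they are combinations of the decrements of `a ↦ 1 / φ (p ^ a)` with
coefficients `f (μ - 1) a ∈ {0, 1}`. Hence every divisor sum `∑_{d ∣ n} F μ d / φ d` is at
most `1 = F μ 1 / φ 1`, and letting `n` run through the factorials shows
`∑_{d > 1} F μ d / φ d ≤ 0`.
For the upper bound, `F μ d` vanishes unless every exponent of `d` is at least `T = tet μ`, and
`1 / φ d ≤ rad d / d`; grouping these `T`-full `d` by their radical `r` bounds the sum by
`∑_{r ≥ 2} r ^ 2 / r ^ T ≤ 2 ^ 4 / 2 ^ T`, while `tet (μ + 1) = 2 ^ T`.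
-/

open Finset Filter

lemma tet_strictMono : StrictMono tet :=
  strictMono_nat_of_lt_succ fun _ => Nat.lt_two_pow_self

lemma two_pow_factorization_le {n p : ℕ} (hn : n ≠ 0) (hp : p.Prime) :
    2 ^ n.factorization p ≤ n :=
  (Nat.pow_le_pow_left hp.two_le _).trans (Nat.ordProj_le p hn)

lemma H_le_of_lt_tet {k n : ℕ} (h : n < tet (k + 1)) : H n ≤ k := by
  induction n using Nat.strong_induction_on generalizing k with
  | _ n ih =>
  rw [H]
  split_ifs with hn
  · exact Nat.zero_le k
  cases k with
  | zero =>
    simp only [tet] at h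
    omega
  | succ j =>
    rw [add_comm 1]
    refine Nat.add_le_add_right (Finset.sup_le fun p _ =>
      ih _ (Nat.factorization_lt _ (by omega)) ?_) 1
    exact (Nat.pow_lt_pow_iff_right (by norm_num)).1
      ((two_pow_factorization_le (by omega) (Nat.prime_of_mem_primeFactors p.2)).trans_lt h)

lemma f_mem_Icc (k n : ℕ) : f k n ∈ Set.Icc 0 1 := by
  unfold f; split_ifs <;> simp

lemma f_eq_one_of_lt_tet {k n : ℕ} (h : n < tet (k + 1)) : f k n = 1 :=
  if_pos (H_le_of_lt_tet h)

lemma f_zero (k : ℕ) : f k 0 = 1 := by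
  simp [f, H]

lemma F_eq_factorization_prod (μ n : ℕ) :
    F μ n = n.factorization.prod fun _ a => f (μ - 1) a - f (μ - 1) (a - 1) := rfl

lemma F_one (μ : ℕ) : F μ 1 = 1 := by simp [F]

lemma F_mul_of_coprime (μ : ℕ) {a b : ℕ} (hab : a.Coprime b) :
    F μ (a * b) = F μ a * F μ b := by
  simp only [F_eq_factorization_prod, Nat.factorization_mul_of_coprime hab]
  exact Finsupp.prod_add_index_of_disjoint hab.disjoint_primeFactors _

lemma F_prime_pow (μ : ℕ) {p a : ℕ} (hp : p.Prime) (ha : a ≠ 0) :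
    F μ (p ^ a) = f (μ - 1) a - f (μ - 1) (a - 1) := by
  rw [F, Nat.primeFactors_prime_pow ha hp, prod_singleton, hp.factorization_pow,
    Finsupp.single_eq_same]

lemma abs_F_le_one (μ n : ℕ) : |F μ n| ≤ 1 := by
  rw [F, abs_prod]
  refine prod_le_one (fun _ _ => abs_nonneg _) fun p _ => abs_sub_le_iff.2 ⟨?_, ?_⟩ <;>
  · have := f_mem_Icc (μ - 1) (n.factorization p)
    have := f_mem_Icc (μ - 1) (n.factorization p - 1)
    simp only [Set.mem_Icc] at *
    omega

def IsFull (k n : ℕ) : Prop := ∀ p ∈ n.primeFactors, k ≤ n.factorization p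

lemma isFull_of_F_ne_zero {μ n : ℕ} (hμ : μ ≠ 0) (h : F μ n ≠ 0) : IsFull (tet μ) n := by
  intro p hp
  by_contra! hlt
  refine h (prod_eq_zero hp ?_)
  obtain ⟨k, rfl⟩ : ∃ k, μ = k + 1 := ⟨μ - 1, by omega⟩
  rw [Nat.add_sub_cancel, f_eq_one_of_lt_tet hlt, f_eq_one_of_lt_tet (by omega), sub_self]

namespace ArithmeticFunction

lemma IsMultiplicative.sum_divisors_eq_prod_primeFactors {R : Type*} [CommSemiring R]
    {g : ArithmeticFunction R} (hg : g.IsMultiplicative) {n : ℕ} (hn : n ≠ 0) :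
    ∑ d ∈ n.divisors, g d =
      ∏ p ∈ n.primeFactors, ∑ a ∈ range (n.factorization p + 1), g (p ^ a) := by
  rw [← coe_mul_zeta_apply, (hg.mul isMultiplicative_zeta.natCast).multiplicative_factorization
    _ hn, Finsupp.prod, Nat.support_factorization]
  refine prod_congr rfl fun p hp => ?_
  rw [coe_mul_zeta_apply, Nat.sum_divisors_prime_pow (Nat.prime_of_mem_primeFactors hp)]

end ArithmeticFunction

lemma sum_inv_divisors_le_prod_primeFactors {n : ℕ} (hn : n ≠ 0) :
    ∑ d ∈ n.divisors, (d : ℝ)⁻¹ ≤ ∏ p ∈ n.primeFactors, (p : ℝ) := by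
  let inv : ArithmeticFunction ℝ := ⟨fun d => (d : ℝ)⁻¹, by simp⟩
  have hinv : inv.IsMultiplicative :=
    ArithmeticFunction.IsMultiplicative.iff_ne_zero.2
      ⟨by simp [inv], fun _ _ _ => by simp [inv, mul_comm]⟩
  change ∑ d ∈ n.divisors, inv d ≤ _
  rw [hinv.sum_divisors_eq_prod_primeFactors hn]
  refine prod_le_prod (fun _ _ => sum_nonneg fun _ _ => inv_nonneg.2 (Nat.cast_nonneg _))
    fun p hp => ?_
  have hp2 : (2 : ℝ) ≤ p := by exact_mod_cast (Nat.prime_of_mem_primeFactors hp).two_le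
  calc ∑ a ∈ range (n.factorization p + 1), inv (p ^ a)
      ≤ ∑ a ∈ range (n.factorization p + 1), (1 / 2 : ℝ) ^ a := by
        refine sum_le_sum fun a _ => ?_
        simp only [inv, ArithmeticFunction.coe_mk, Nat.cast_pow, one_div, inv_pow]
        exact inv_anti₀ (by positivity) (pow_le_pow_left₀ zero_le_two hp2 a)
    _ ≤ 2 := sum_geometric_two_le _
    _ ≤ p := hp2

/-- Abel summation rewrites the sum as `u K * w K + ∑ a < K, u a * (w a - w (a + 1))`,
a combination of the decrements `w a - w (a + 1) ≥ 0` with weights in `[0, 1]`. -/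
lemma mul_add_sum_range_sub_mul_mem_Icc {u w : ℕ → ℝ} (hu : ∀ a, u a ∈ Set.Icc 0 1)
    (hw : Antitone w) (hw0 : ∀ a, 0 ≤ w a) (K : ℕ) :
    u 0 * w 0 + ∑ a ∈ range K, (u (a + 1) - u a) * w (a + 1) ∈ Set.Icc 0 (w 0) := by
  set S : ℕ → ℝ := fun K => u 0 * w 0 + ∑ a ∈ range K, (u (a + 1) - u a) * w (a + 1)
    with hS
  have key (K : ℕ) : 0 ≤ S K - u K * w K ∧ S K - u K * w K ≤ w 0 - w K := by
    induction K with
    | zero => simp [hS]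
    | succ K ih =>
      have hstep : S (K + 1) = S K + (u (K + 1) - u K) * w (K + 1) := by
        simp only [hS, sum_range_succ]
        ring
      obtain ⟨hu0, hu1⟩ := hu K
      have := hw K.le_succ
      rw [hstep]
      constructor <;> nlinarith
  obtain ⟨hu0, hu1⟩ := hu K
  obtain ⟨h0, h1⟩ := key K
  constructor <;> nlinarith [hw0 K]

noncomputable def FDivTotient (μ : ℕ) : ArithmeticFunction ℝ :=
  ⟨fun d => (F μ d : ℝ) / d.totient, by simp⟩

lemma FDivTotient_apply (μ d : ℕ) : FDivTotient μ d = (F μ d : ℝ) / d.totient := rfl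

lemma isMultiplicative_FDivTotient (μ : ℕ) : (FDivTotient μ).IsMultiplicative := by
  refine ⟨by simp [FDivTotient_apply, F_one], fun {a b} hab => ?_⟩
  simp only [FDivTotient_apply, F_mul_of_coprime μ hab, Nat.totient_mul hab]
  push_cast
  ring

lemma sum_range_FDivTotient_prime_pow_mem_Icc (μ : ℕ) {p : ℕ} (hp : p.Prime) (K : ℕ) :
    ∑ a ∈ range (K + 1), FDivTotient μ (p ^ a) ∈ Set.Icc 0 1 := by
  have htot : ∀ a, (0 : ℝ) < (p ^ a).totient := fun a => by
    exact_mod_cast Nat.totient_pos.2 (pow_pos hp.pos a)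
  have hw : Antitone fun a => ((p ^ a).totient : ℝ)⁻¹ :=
    antitone_nat_of_succ_le fun a => inv_anti₀ (htot a) <| by
      exact_mod_cast Nat.le_of_dvd (Nat.totient_pos.2 (pow_pos hp.pos _))
        (Nat.totient_dvd_of_dvd (pow_dvd_pow p a.le_succ))
  have hu : ∀ a, (f (μ - 1) a : ℝ) ∈ Set.Icc 0 1 := fun a => by
    have := f_mem_Icc (μ - 1) a
    simp only [Set.mem_Icc] at this ⊢
    exact_mod_cast this
  have hsum : ∑ a ∈ range (K + 1), FDivTotient μ (p ^ a) =
      (f (μ - 1) 0 : ℝ) * ((p ^ 0).totient : ℝ)⁻¹ + ∑ a ∈ range K,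
        ((f (μ - 1) (a + 1) : ℝ) - f (μ - 1) a) * ((p ^ (a + 1)).totient : ℝ)⁻¹ := by
    rw [sum_range_succ', add_comm]
    congr 1
    · simp [FDivTotient_apply, F_one, f_zero]
    · refine sum_congr rfl fun a _ => ?_
      rw [FDivTotient_apply, F_prime_pow μ hp (Nat.add_one_ne_zero a), Nat.add_sub_cancel,
        div_eq_mul_inv]
      push_cast
      rfl
  rw [hsum]
  simpa using mul_add_sum_range_sub_mul_mem_Icc hu hw (fun a => inv_nonneg.2 (htot a).le) K

lemma sum_divisors_FDivTotient_le_one (μ : ℕ) {n : ℕ} (hn : n ≠ 0) :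
    ∑ d ∈ n.divisors, FDivTotient μ d ≤ 1 := by
  rw [(isMultiplicative_FDivTotient μ).sum_divisors_eq_prod_primeFactors hn]
  have h := fun p (hp : p ∈ n.primeFactors) =>
    sum_range_FDivTotient_prime_pow_mem_Icc μ (Nat.prime_of_mem_primeFactors hp)
      (n.factorization p)
  exact prod_le_one (fun p hp => (h p hp).1) fun p hp => (h p hp).2

def rad (n : ℕ) : ℕ := ∏ p ∈ n.primeFactors, p

lemma rad_pos (n : ℕ) : 0 < rad n :=
  prod_pos fun _ hp => (Nat.prime_of_mem_primeFactors hp).pos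

lemma two_le_rad {n : ℕ} (hn : 1 < n) : 2 ≤ rad n := by
  obtain ⟨p, hp⟩ := Nat.nonempty_primeFactors.2 hn
  exact (Nat.prime_of_mem_primeFactors hp).two_le.trans <|
    single_le_prod' (fun q hq => (Nat.prime_of_mem_primeFactors hq).one_lt.le) hp

lemma primeFactors_rad (n : ℕ) : (rad n).primeFactors = n.primeFactors :=
  Nat.primeFactors_prod_primeFactors n

lemma inv_totient_le_rad_div (n : ℕ) : (n.totient : ℝ)⁻¹ ≤ rad n / n := by
  rcases Nat.eq_zero_or_pos n with rfl | hn
  · simp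
  have hφ : (0 : ℝ) < n.totient := by exact_mod_cast Nat.totient_pos.2 hn
  have key : n ≤ rad n * n.totient := by
    have h := Nat.totient_mul_prod_primeFactors n
    have : 1 ≤ ∏ p ∈ n.primeFactors, (p - 1) :=
      one_le_prod' fun p hp => Nat.le_sub_one_of_lt (Nat.prime_of_mem_primeFactors hp).one_lt
    rw [rad]
    nlinarith
  rw [le_div_iff₀ (by exact_mod_cast hn), inv_mul_eq_div, div_le_iff₀ hφ]
  exact_mod_cast key

lemma IsFull.rad_pow_dvd {k n : ℕ} (h : IsFull k n) : rad n ^ k ∣ n := by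
  rcases eq_or_ne n 0 with rfl | hn
  · exact dvd_zero _
  conv_rhs => rw [Nat.prod_primeFactors_pow_factorization hn]
  rw [rad, ← prod_pow]
  exact prod_dvd_prod_of_dvd _ _ fun p hp => pow_dvd_pow p (h p hp)

lemma sum_inv_le_of_rad_eq {k r : ℕ} {S : Finset ℕ}
    (hS : ∀ d ∈ S, d ≠ 0 ∧ IsFull k d ∧ rad d = r) :
    ∑ d ∈ S, (d : ℝ)⁻¹ ≤ r / r ^ k := by
  rcases S.eq_empty_or_nonempty with rfl | ⟨d₀, hd₀⟩
  · simp only [sum_empty]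
    positivity
  have hr : r ≠ 0 := (hS d₀ hd₀).2.2 ▸ (rad_pos d₀).ne'
  set N := ∏ d ∈ S, d
  have hN : N ≠ 0 := prod_ne_zero_iff.2 fun d hd => (hS d hd).1
  have hsub : S ⊆ N.divisors.image (r ^ k * ·) := by
    intro d hd
    obtain ⟨-, hfull, hrad⟩ := hS d hd
    have hdvd : r ^ k ∣ d := hrad ▸ hfull.rad_pow_dvd
    exact mem_image.2 ⟨d / r ^ k, Nat.mem_divisors.2
      ⟨(Nat.div_dvd_of_dvd hdvd).trans (dvd_prod_of_mem _ hd), hN⟩, Nat.mul_div_cancel' hdvd⟩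
  have hradN : ∏ p ∈ N.primeFactors, p ≤ r := by
    refine Nat.le_of_dvd (Nat.pos_of_ne_zero hr) ((Nat.prod_primeFactors_dvd_iff hr).2 ?_)
    intro p hp
    have hp' := Nat.prime_of_mem_primeFactors hp
    obtain ⟨d, hd, hpd⟩ := (hp'.prime.dvd_finsetProd_iff _).1 (Nat.dvd_of_mem_primeFactors hp)
    rw [← (hS d hd).2.2, primeFactors_rad]
    exact Nat.mem_primeFactors.2 ⟨hp', hpd, (hS d hd).1⟩
  calc ∑ d ∈ S, (d : ℝ)⁻¹ ≤ ∑ d ∈ N.divisors.image (r ^ k * ·), (d : ℝ)⁻¹ :=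
        sum_le_sum_of_subset_of_nonneg hsub fun _ _ _ => by positivity
    _ = ∑ e ∈ N.divisors, ((r ^ k * e : ℕ) : ℝ)⁻¹ :=
        sum_image fun _ _ _ _ h => Nat.eq_of_mul_eq_mul_left (by positivity) h
    _ = ((r : ℝ) ^ k)⁻¹ * ∑ e ∈ N.divisors, (e : ℝ)⁻¹ := by
        rw [mul_sum]
        push_cast
        simp only [mul_inv]
    _ ≤ ((r : ℝ) ^ k)⁻¹ * r := by
        gcongr
        exact (sum_inv_divisors_le_prod_primeFactors hN).trans <| by
          rw [← Nat.cast_prod]; exact_mod_cast hradN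
    _ = r / r ^ k := inv_mul_eq_div _ _

lemma sq_div_pow_le {r : ℝ} (hr : 2 ≤ r) {k : ℕ} (hk : 4 ≤ k) :
    r ^ 2 / r ^ k ≤ 2 ^ 4 / 2 ^ k * (r ^ 2)⁻¹ := by
  obtain ⟨j, rfl⟩ : ∃ j, k = j + 4 := ⟨k - 4, by omega⟩
  rw [← div_eq_mul_inv, div_div, div_le_div_iff₀ (by positivity) (by positivity), pow_add,
    pow_add]
  have : (2 : ℝ) ^ j ≤ r ^ j := pow_le_pow_left₀ zero_le_two hr j
  calc r ^ 2 * (2 ^ j * 2 ^ 4 * r ^ 2) = 2 ^ 4 * (2 ^ j * (r ^ 2 * r ^ 2)) := by ring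
    _ ≤ 2 ^ 4 * (r ^ j * (r ^ 2 * r ^ 2)) := by gcongr
    _ = 2 ^ 4 * (r ^ j * r ^ 4) := by ring

lemma sum_inv_sq_le_one {R : Finset ℕ} (hR : ∀ r ∈ R, 2 ≤ r) :
    ∑ r ∈ R, ((r : ℝ) ^ 2)⁻¹ ≤ 1 :=
  calc ∑ r ∈ R, ((r : ℝ) ^ 2)⁻¹ ≤ ∑ r ∈ Ioo 1 (R.sup id + 1), ((r : ℝ) ^ 2)⁻¹ :=
        sum_le_sum_of_subset_of_nonneg
          (fun r hr => mem_Ioo.2 ⟨hR r hr, Nat.lt_succ_of_le (le_sup (f := id) hr)⟩)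
          fun _ _ _ => by positivity
    _ ≤ 2 / (1 + 1) := by exact_mod_cast sum_Ioo_inv_sq_le 1 _
    _ = 1 := by norm_num

lemma sum_inv_totient_le_of_isFull {k : ℕ} (hk : 4 ≤ k) {A : Finset ℕ}
    (hA : ∀ d ∈ A, 1 < d ∧ IsFull k d) :
    ∑ d ∈ A, (d.totient : ℝ)⁻¹ ≤ 2 ^ 4 / 2 ^ k := by
  classical
  calc ∑ d ∈ A, (d.totient : ℝ)⁻¹ ≤ ∑ d ∈ A, (rad d : ℝ) / d :=
        sum_le_sum fun d _ => inv_totient_le_rad_div d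
    _ = ∑ r ∈ A.image rad, (r : ℝ) * ∑ d ∈ A with rad d = r, (d : ℝ)⁻¹ := by
        rw [← sum_fiberwise_of_maps_to fun d hd => mem_image_of_mem rad hd]
        refine sum_congr rfl fun r _ => ?_
        rw [mul_sum]
        exact sum_congr rfl fun d hd => by rw [(mem_filter.1 hd).2, div_eq_mul_inv]
    _ ≤ ∑ r ∈ A.image rad, 2 ^ 4 / 2 ^ k * ((r : ℝ) ^ 2)⁻¹ := by
        refine sum_le_sum fun r hr => ?_
        obtain ⟨d₀, hd₀, rfl⟩ := mem_image.1 hr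
        have h2 : (2 : ℝ) ≤ rad d₀ := by exact_mod_cast two_le_rad (hA d₀ hd₀).1
        calc (rad d₀ : ℝ) * ∑ d ∈ A with rad d = rad d₀, (d : ℝ)⁻¹
            ≤ rad d₀ * (rad d₀ / rad d₀ ^ k) := by
              gcongr
              refine sum_inv_le_of_rad_eq fun d hd => ?_
              obtain ⟨hdA, hrad⟩ := mem_filter.1 hd
              exact ⟨by linarith [(hA d hdA).1], (hA d hdA).2, hrad⟩
          _ = (rad d₀ : ℝ) ^ 2 / rad d₀ ^ k := by ring
          _ ≤ 2 ^ 4 / 2 ^ k * ((rad d₀ : ℝ) ^ 2)⁻¹ := sq_div_pow_le h2 hk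
    _ ≤ 2 ^ 4 / 2 ^ k := by
        rw [← mul_sum]
        refine mul_le_of_le_one_right (by positivity) (sum_inv_sq_le_one fun r hr => ?_)
        obtain ⟨d, hd, rfl⟩ := mem_image.1 hr
        exact two_le_rad (hA d hd).1

namespace ArithmeticFunction

lemma hasSum_map_one_add {R : Type*} [AddCommMonoid R] [TopologicalSpace R] [ContinuousAdd R]
    {g : ArithmeticFunction R} {s : R} (h : HasSum (fun d : {d : ℕ // 1 < d} => g d) s) :
    HasSum g (g 1 + s) := by
  convert (hasSum_ite_eq 1 (g 1)).add (hasSum_subtype_iff_indicator (s := {d | 1 < d}).1 h)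
    using 1
  funext d
  rcases lt_trichotomy d 1 with hd | rfl | hd
  · obtain rfl : d = 0 := by omega
    simp
  · simp
  · simp [hd.ne', Set.indicator_of_mem (show d ∈ {d | 1 < d} from hd)]

lemma tsum_le_of_sum_divisors_le {g : ArithmeticFunction ℝ} (hg : Summable g) {c : ℝ}
    (h : ∀ n ≠ 0, ∑ d ∈ n.divisors, g d ≤ c) : ∑' d, g d ≤ c := by
  have hs : Tendsto (fun N : ℕ => insert 0 N.factorial.divisors) atTop atTop := by
    refine tendsto_atTop_finset_of_monotone (fun a b hab => insert_subset_insert _ ?_) fun d => ?_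
    · exact Nat.divisors_subset_of_dvd (Nat.factorial_ne_zero _) (Nat.factorial_dvd_factorial hab)
    · rcases Nat.eq_zero_or_pos d with rfl | hd
      · exact ⟨0, mem_insert_self _ _⟩
      · exact ⟨d, mem_insert_of_mem (Nat.mem_divisors.2
          ⟨Nat.dvd_factorial hd le_rfl, Nat.factorial_ne_zero _⟩)⟩
  refine le_of_tendsto (hg.hasSum.comp hs) (Eventually.of_forall fun N => ?_)
  rw [Function.comp_apply, sum_insert (by simp), map_zero, zero_add]
  exact h _ (Nat.factorial_ne_zero _)

end ArithmeticFunction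

lemma tsum_FDivTotient_one_lt_nonpos (μ : ℕ)
    (hs : Summable fun d : {d : ℕ // 1 < d} => FDivTotient μ d) :
    ∑' d : {d : ℕ // 1 < d}, FDivTotient μ d ≤ 0 := by
  have h := ArithmeticFunction.hasSum_map_one_add hs.hasSum
  have := ArithmeticFunction.tsum_le_of_sum_divisors_le h.summable fun n hn =>
    sum_divisors_FDivTotient_le_one μ hn
  rw [h.tsum_eq, (isMultiplicative_FDivTotient μ).map_one] at this
  linarith

lemma sum_abs_FDivTotient_le {μ : ℕ} (hμ : μ ≠ 0) (hT : 4 ≤ tet μ) {A : Finset ℕ}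
    (hA : ∀ d ∈ A, 1 < d) :
    ∑ d ∈ A, |FDivTotient μ d| ≤ 2 ^ 4 / 2 ^ tet μ := by
  classical
  calc ∑ d ∈ A, |FDivTotient μ d|
      ≤ ∑ d ∈ A with F μ d ≠ 0, (d.totient : ℝ)⁻¹ := by
        rw [sum_filter]
        refine sum_le_sum fun d _ => ?_
        split_ifs with hF
        · rw [FDivTotient_apply, abs_div, Nat.abs_cast, div_eq_mul_inv]
          exact mul_le_of_le_one_left (by positivity) (by exact_mod_cast abs_F_le_one μ d)
        · simp [FDivTotient_apply, not_not.1 hF]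
    _ ≤ 2 ^ 4 / 2 ^ tet μ := sum_inv_totient_le_of_isFull hT fun d hd =>
        ⟨hA d (mem_filter.1 hd).1, isFull_of_F_ne_zero hμ (mem_filter.1 hd).2⟩

theorem stmt15 (m : ℕ) (hm : 4 ≤ m) :
    Summable (fun d : {d : ℕ // 1 < d} =>
      |(F (m - 1) (d : ℕ) : ℝ) / (Nat.totient (d : ℕ) : ℝ)|) ∧
    0 ≤ -∑' d : {d : ℕ // 1 < d}, (F (m - 1) (d : ℕ) : ℝ) / (Nat.totient (d : ℕ) : ℝ) ∧
    -∑' d : {d : ℕ // 1 < d}, (F (m - 1) (d : ℕ) : ℝ) / (Nat.totient (d : ℕ) : ℝ)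
      ≤ 2 ^ 28 / tet m := by
  simp only [← FDivTotient_apply]
  have hT : 4 ≤ tet (m - 1) := (show 4 ≤ tet 2 by decide).trans <|
    tet_strictMono.monotone (show 2 ≤ m - 1 by omega)
  have htet : (tet m : ℝ) = 2 ^ tet (m - 1) := by
    obtain ⟨k, rfl⟩ : ∃ k, m = k + 1 := ⟨m - 1, by omega⟩
    simp [tet]
  have hbound (u : Finset {d : ℕ // 1 < d}) :
      ∑ d ∈ u, |FDivTotient (m - 1) d| ≤ 2 ^ 4 / 2 ^ tet (m - 1) := by
    have h := sum_abs_FDivTotient_le (A := u.map (Function.Embedding.subtype _)) (by omega) hT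
      fun d hd => by
        obtain ⟨x, -, rfl⟩ := mem_map.1 hd
        exact x.2
    rwa [sum_map] at h
  have hsum := summable_of_sum_le (fun _ => abs_nonneg _) hbound
  refine ⟨hsum, neg_nonneg.2 (tsum_FDivTotient_one_lt_nonpos _ hsum.of_abs), ?_⟩
  calc -∑' d : {d : ℕ // 1 < d}, FDivTotient (m - 1) d
      ≤ ∑' d : {d : ℕ // 1 < d}, |FDivTotient (m - 1) d| := (neg_le_abs _).trans <| by
        simpa only [Real.norm_eq_abs] using norm_tsum_le_tsum_norm
          (f := fun d : {d : ℕ // 1 < d} => FDivTotient (m - 1) d)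
          (by simpa only [Real.norm_eq_abs] using hsum)
    _ ≤ 2 ^ 4 / 2 ^ tet (m - 1) := Real.tsum_le_of_sum_le (fun _ => abs_nonneg _) hbound
    _ ≤ 2 ^ 28 / tet m := by
        rw [htet]
        gcongr <;> norm_num
end
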